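/- arXiv:2102.09477 — 7 statements merged into one kernel-verified Lean document; each statement's English description precedes it below -/
import Mathlib

section
/- Let S ⊆ E be a closed set such that reach(S, x) > 0 for every x ∈ S, i.e. every point of S has a ball around it all of whose points have a unique nearest point in S. Then S is locally connected. -/
/-!
The nearest-point map `P` of a closed set `S` in a proper space is continuous wherever the nearest
point is unique, since every cluster value of `P` at such a point is a nearest point. If `x ∈ S` has
positive reach `r` and `δ ≤ r`, then `P '' ball x δ` is therefore preconnected; it contains
`S ∩ ball x δ`, because `P` fixes `S`, and lies in `ball x (2 * δ)`. These sets form a basis of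
preconnected neighbourhoods of `x` in `S`.
-/

open Filter Topology Metric Set

variable {E : Type*} [NormedAddCommGroup E] [InnerProductSpace ℝ E]

/-- `z` has a unique nearest point in `S`. -/
def HasUniqueNearestPoint (S : Set E) (z : E) : Prop :=
  ∃! s : E, s ∈ S ∧ dist z s = infDist z S

section MetricSpace

variable {X : Type*} [MetricSpace X] {S : Set X} {x z : X}

open Classical in
/-- A chosen nearest point of `z` in `S`; it is `z` itself when there is none. -/
noncomputable def nearestPoint (S : Set X) (z : X) : X :=
  if h : ∃ s ∈ S, dist z s = infDist z S then h.choose else z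

theorem nearestPoint_spec (h : ∃ s ∈ S, dist z s = infDist z S) :
    nearestPoint S z ∈ S ∧ dist z (nearestPoint S z) = infDist z S := by
  rw [nearestPoint, dif_pos h]
  exact h.choose_spec

theorem nearestPoint_eq_self (hx : x ∈ S) : nearestPoint S x = x := by
  have hnear := (nearestPoint_spec ⟨x, hx, by rw [dist_self, infDist_zero_of_mem hx]⟩).2
  rw [infDist_zero_of_mem hx, dist_eq_zero] at hnear
  exact hnear.symm

variable [ProperSpace X]

theorem nearestPoint_spec_of_isClosed (hS : IsClosed S) (hne : S.Nonempty) (z : X) :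
    nearestPoint S z ∈ S ∧ dist z (nearestPoint S z) = infDist z S :=
  nearestPoint_spec <| (hS.exists_infDist_eq_dist hne z).imp fun _ ⟨hs, heq⟩ => ⟨hs, heq.symm⟩

theorem dist_nearestPoint_le (hS : IsClosed S) (hne : S.Nonempty) (x z : X) :
    dist x (nearestPoint S z) ≤ infDist x S + 2 * dist z x :=
  calc dist x (nearestPoint S z) ≤ dist x z + dist z (nearestPoint S z) := dist_triangle _ _ _
    _ = dist z x + infDist z S := by
        rw [dist_comm, (nearestPoint_spec_of_isClosed hS hne z).2]
    _ ≤ dist z x + (infDist x S + dist z x) := by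
        gcongr
        exact infDist_le_infDist_add_dist
    _ = infDist x S + 2 * dist z x := by ring

theorem image_nearestPoint_ball_subset (hS : IsClosed S) (hx : x ∈ S) (δ : ℝ) :
    nearestPoint S '' ball x δ ⊆ ball x (2 * δ) := by
  rintro _ ⟨z, hz, rfl⟩
  have hle := dist_nearestPoint_le hS ⟨x, hx⟩ x z
  rw [infDist_zero_of_mem hx] at hle
  rw [mem_ball, dist_comm]
  linarith [mem_ball.mp hz]

end MetricSpace

section NormedSpace

variable {F : Type*} [NormedAddCommGroup F] [ProperSpace F] {S : Set F}

theorem continuousAt_nearestPoint (hS : IsClosed S) {z : F}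
    (hz : HasUniqueNearestPoint S z) : ContinuousAt (nearestPoint S) z := by
  have hne : S.Nonempty := hz.exists.imp fun _ hs => hs.1
  have hmemS (w : F) : nearestPoint S w ∈ S := (nearestPoint_spec_of_isClosed hS hne w).1
  have hnear (ε : ℝ) (hε : 0 < ε) :
      ∀ᶠ w in 𝓝 z, nearestPoint S w ∈ closedBall z (infDist z S + 2 * ε) := by
    filter_upwards [ball_mem_nhds z hε] with w hw
    have := dist_nearestPoint_le hS hne z w
    rw [mem_closedBall, dist_comm]
    linarith [mem_ball.mp hw]
  refine (isCompact_closedBall z (infDist z S + 2 * 1)).tendsto_nhds_of_unique_mapClusterPt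
    (hnear 1 one_pos) fun a _ ha => ?_
  have haS : a ∈ S := hS.mem_of_mapClusterPt ha (Eventually.of_forall hmemS)
  have hdist : dist z a ≤ infDist z S := le_of_forall_pos_le_add fun ε hε => by
    have := isClosed_closedBall.mem_of_mapClusterPt ha (hnear (ε / 2) (half_pos hε))
    rw [mem_closedBall, dist_comm] at this
    linarith
  exact hz.unique ⟨haS, le_antisymm hdist (infDist_le_dist_of_mem haS)⟩
    ⟨hmemS z, (nearestPoint_spec hz.exists).2⟩

theorem isPreconnected_image_nearestPoint_ball [NormedSpace ℝ F] (hS : IsClosed S) {x : F}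
    {δ : ℝ} (h : ∀ z ∈ ball x δ, HasUniqueNearestPoint S z) :
    IsPreconnected (nearestPoint S '' ball x δ) :=
  (convex_ball x δ).isPreconnected.image _ fun z hz =>
    (continuousAt_nearestPoint hS (h z hz)).continuousWithinAt

end NormedSpace

theorem locallyConnected_of_positive_reach [FiniteDimensional ℝ E]
    (S : Set E) (hS : IsClosed S)
    (hreach : ∀ x ∈ S, ∃ r : ℝ, 0 < r ∧ ∀ z ∈ ball x r, HasUniqueNearestPoint S z) :
    LocallyConnectedSpace S := by
  rw [locallyConnectedSpace_iff_connected_subsets]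
  intro x U hU
  obtain ⟨ε, hε, hεU⟩ := Metric.mem_nhds_iff.mp hU
  obtain ⟨r, hr, hunique⟩ := hreach x x.2
  set δ := min (ε / 2) r
  have hδ : 0 < δ := lt_min (half_pos hε) hr
  set T := nearestPoint S '' ball (x : E) δ
  have hTS : T ⊆ S := by
    rintro _ ⟨z, -, rfl⟩
    exact (nearestPoint_spec_of_isClosed hS ⟨x, x.2⟩ z).1
  refine ⟨Subtype.val ⁻¹' T, ?_, ?_, ?_⟩
  · exact mem_of_superset (ball_mem_nhds x hδ) fun y hy => ⟨y, hy, nearestPoint_eq_self y.2⟩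
  · have hT : IsPreconnected T := isPreconnected_image_nearestPoint_ball hS
      fun z hz => hunique z (ball_subset_ball (min_le_right _ _) hz)
    rwa [← Topology.IsInducing.subtypeVal.isPreconnected_image,
      image_preimage_eq_of_subset (by rwa [Subtype.range_coe])]
  · refine fun y hy => hεU ?_
    have := image_nearestPoint_ball_subset hS x.2 δ hy
    rw [mem_ball] at this ⊢
    exact this.trans_le (by linarith [min_le_left (ε / 2) r])
end

section
/- Let S ⊆ E be a closed set, let x ∈ ∂S, and suppose there exist an open neighborhood U of x and a C¹ map ψ = (ψ₁, …, ψ_k) : U → ℝ^k whose derivative Dψ(u) : E → ℝ^k is surjective for every u ∈ U, such that U ∩ ∂S = ψ⁻¹(0). Then N^P_S(x) ⊆ span{∇ψ₁(x), …, ∇ψ_k(x)} = (ker Dψ(x))^⊥, the normal space to ∂S at x. -/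
/-! A proximal normal `ξ` to `S` at `x` satisfies `⟪ξ, γ t - x⟫ ≤ σ ‖γ t - x‖² = O(t²)` along any
curve `γ` in `S` with `γ 0 = x`, so dividing by `t → 0⁺` gives `⟪ξ, γ' 0⟫ ≤ 0`. By the implicit
function theorem every `v ∈ ker Dψ(x)` is the velocity of a curve in the level set
`U ∩ ψ⁻¹(0) ⊆ ∂S ⊆ S`, and so is `-v`; hence `ξ ⊥ ker Dψ(x)`. Finally `ker Dψ(x)` is the
orthogonal complement of the span of the gradients, and that span is finite-dimensional, hence
equal to its double orthogonal complement. -/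

open Filter Topology Metric Set
open scoped RealInnerProductSpace NNReal

variable {E : Type*} [NormedAddCommGroup E] [InnerProductSpace ℝ E]

/-- The proximal normal cone to a set `S` at a point `x`. -/
def proxNormalCone (S : Set E) (x : E) : Set E :=
  {ξ | ∃ σ : ℝ, 0 < σ ∧ ∃ U ∈ 𝓝 x, ∀ y ∈ S ∩ U, ⟪ξ, y - x⟫ ≤ σ * ‖y - x‖ ^ 2}

/-- The Bouligand (contingent) tangent cone to `S` at `x`. -/
def bouligandCone (S : Set E) (x : E) : Set E :=
  {v | ∃ (z : ℕ → E) (t : ℕ → ℝ), (∀ i, z i ∈ S) ∧ (∀ i, 0 < t i) ∧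
    Tendsto z atTop (𝓝 x) ∧ Tendsto t atTop (𝓝 0) ∧
    Tendsto (fun i => (t i)⁻¹ • (z i - x)) atTop (𝓝 v)}

/-- The polar cone of a set `K`. -/
def polarCone (K : Set E) : Set E := {v | ∀ w ∈ K, ⟪v, w⟫ ≤ 0}

/-- `S` is `φ`-convex for a continuous nonnegative function `φ` on `S`. -/
def IsPhiConvex (S : Set E) (φ : E → ℝ) : Prop :=
  ContinuousOn φ S ∧ (∀ x ∈ S, 0 ≤ φ x) ∧
  ∀ x ∈ S, ∃ U ∈ 𝓝 x, ∀ ξ ∈ proxNormalCone S x, ∀ y ∈ S ∩ U,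
    ⟪ξ, y - x⟫ ≤ φ x * ‖ξ‖ * ‖y - x‖ ^ 2

/-- `S` is prox-regular if it is `φ`-convex for some continuous `φ : S → [0,∞)`. -/
def ProxRegular (S : Set E) : Prop := ∃ φ : E → ℝ, IsPhiConvex S φ

section Gradient

variable [CompleteSpace E] {ι : Type*} {ψ : E → ι → ℝ} {x : E}

theorem inner_gradient_apply (hψ : DifferentiableAt ℝ ψ x) (i : ι) (v : E) :
    ⟪gradient (fun y => ψ y i) x, v⟫ = fderiv ℝ ψ x v i := by
  rw [gradient, (hasFDerivAt_pi'.1 hψ.hasFDerivAt i).fderiv, InnerProductSpace.toDual_symm_apply]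
  rfl

theorem ker_fderiv_eq_orthogonal_span_gradient (hψ : DifferentiableAt ℝ ψ x) :
    LinearMap.ker (fderiv ℝ ψ x : E →ₗ[ℝ] (ι → ℝ)) =
      (Submodule.span ℝ (range fun i => gradient (fun y => ψ y i) x))ᗮ := by
  ext v
  simp only [LinearMap.mem_ker, Submodule.span_range_eq_iSup, ← Submodule.iInf_orthogonal,
    Submodule.mem_iInf, Submodule.mem_orthogonal_singleton_iff_inner_right,
    inner_gradient_apply hψ, funext_iff]
  rfl

theorem span_gradient_eq_orthogonal_ker_fderiv [Finite ι] (hψ : DifferentiableAt ℝ ψ x) :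
    Submodule.span ℝ (range fun i => gradient (fun y => ψ y i) x) =
      (LinearMap.ker (fderiv ℝ ψ x : E →ₗ[ℝ] (ι → ℝ)))ᗮ := by
  have : FiniteDimensional ℝ (Submodule.span ℝ (range fun i => gradient (fun y => ψ y i) x)) :=
    FiniteDimensional.span_of_finite ℝ (finite_range _)
  have := FiniteDimensional.complete ℝ
    (Submodule.span ℝ (range fun i => gradient (fun y => ψ y i) x))
  rw [ker_fderiv_eq_orthogonal_span_gradient hψ, Submodule.orthogonal_orthogonal]

end Gradient

theorem inner_le_zero_of_mem_proxNormalCone {S : Set E} {x ξ v : E} {γ : ℝ → E}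
    (hξ : ξ ∈ proxNormalCone S x) (hγ0 : γ 0 = x) (hγ : HasDerivWithinAt γ v (Ioi 0) 0)
    (hγS : ∀ᶠ t in 𝓝[>] 0, γ t ∈ S) : ⟪ξ, v⟫ ≤ 0 := by
  obtain ⟨σ, -, V, hV, hprox⟩ := hξ
  have hslope : Tendsto (slope γ 0) (𝓝[>] 0) (𝓝 v) :=
    (hasDerivWithinAt_iff_tendsto_slope' (lt_irrefl 0)).1 hγ
  have hγV : ∀ᶠ t in 𝓝[>] 0, γ t ∈ V := hγ.continuousWithinAt.tendsto (hγ0 ▸ hV)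
  have hbound : ∀ᶠ t in 𝓝[>] (0 : ℝ), ⟪ξ, slope γ 0 t⟫ ≤ σ * t * ‖slope γ 0 t‖ ^ 2 := by
    filter_upwards [hγS, hγV, self_mem_nhdsWithin] with t htS htV (ht : 0 < t)
    rw [slope_def_module, hγ0, sub_zero, real_inner_smul_right, norm_smul, Real.norm_eq_abs,
      abs_of_pos (inv_pos.2 ht)]
    calc t⁻¹ * ⟪ξ, γ t - x⟫ ≤ t⁻¹ * (σ * ‖γ t - x‖ ^ 2) := by
          gcongr
          exact hprox (γ t) ⟨htS, htV⟩
      _ = σ * t * (t⁻¹ * ‖γ t - x‖) ^ 2 := by field_simp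
  have hbound_lim : Tendsto (fun t => σ * t * ‖slope γ 0 t‖ ^ 2) (𝓝[>] 0) (𝓝 0) := by
    have hσt : Tendsto (fun t : ℝ => σ * t) (𝓝[>] 0) (𝓝 0) := by
      simpa using (tendsto_nhdsWithin_of_tendsto_nhds tendsto_id :
        Tendsto id (𝓝[>] (0 : ℝ)) (𝓝 0)).const_mul σ
    simpa using hσt.mul (hslope.norm.pow 2)
  exact le_of_tendsto_of_tendsto ((continuous_const.inner continuous_id).tendsto v |>.comp hslope)
    hbound_lim hbound

section ImplicitCurve

variable {G F : Type*} [NormedAddCommGroup G] [NormedSpace ℝ G] [CompleteSpace G]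
  [NormedAddCommGroup F] [NormedSpace ℝ F] [FiniteDimensional ℝ F]
  {f : G → F} {f' : G →L[ℝ] F} {a v : G}

theorem HasStrictFDerivAt.exists_curve_mem_fiber_hasDerivAt (hf : HasStrictFDerivAt f f' a)
    (hf' : f'.range = ⊤) (hv : f' v = 0) :
    ∃ γ : ℝ → G, γ 0 = a ∧ HasDerivAt γ v 0 ∧ ∀ᶠ t in 𝓝 0, f (γ t) = f a := by
  let w : f'.ker := ⟨v, hv⟩
  have hline : HasDerivAt (fun t : ℝ => t • w) w 0 := by
    simpa using (hasDerivAt_id (0 : ℝ)).smul_const w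
  refine ⟨fun t => hf.implicitFunction f f' hf' (f a) (t • w), by simp, ?_, ?_⟩
  · have hφ : HasFDerivAt (hf.implicitFunction f f' hf' (f a)) f'.ker.subtypeL
        ((0 : ℝ) • w) := by
      simpa using (hf.to_implicitFunction hf').hasFDerivAt
    exact hφ.comp_hasDerivAt 0 hline
  · have hw : Tendsto (fun t : ℝ => t • w) (𝓝 0) (𝓝 0) := by
      simpa using hline.continuousAt.tendsto
    exact (tendsto_const_nhds.prodMk_nhds hw).eventually (hf.map_implicitFunction_eq hf')

end ImplicitCurve

theorem proxNormalCone_subset_orthogonal_ker [CompleteSpace E] {F : Type*} [NormedAddCommGroup F]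
    [NormedSpace ℝ F] [FiniteDimensional ℝ F] {S : Set E} {ψ : E → F} {ψ' : E →L[ℝ] F} {x : E}
    (hψ : HasStrictFDerivAt ψ ψ' x) (hψ' : ψ'.range = ⊤)
    (hS : ∀ᶠ y in 𝓝 x, ψ y = ψ x → y ∈ S) :
    proxNormalCone S x ⊆ (LinearMap.ker (ψ' : E →ₗ[ℝ] F))ᗮ := by
  intro ξ hξ
  have hker : ∀ v ∈ LinearMap.ker (ψ' : E →ₗ[ℝ] F), ⟪ξ, v⟫ ≤ 0 := by
    intro v hv
    obtain ⟨γ, hγ0, hγ, hγψ⟩ := hψ.exists_curve_mem_fiber_hasDerivAt hψ' hv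
    have hγx : Tendsto γ (𝓝 0) (𝓝 x) := hγ0 ▸ hγ.continuousAt.tendsto
    have hγS : ∀ᶠ t in 𝓝 0, γ t ∈ S := hγψ.mp (hγx.eventually hS)
    exact inner_le_zero_of_mem_proxNormalCone hξ hγ0 hγ.hasDerivWithinAt
      (eventually_nhdsWithin_of_eventually_nhds hγS)
  refine (Submodule.mem_orthogonal' _ _).2 fun v hv => le_antisymm (hker v hv) ?_
  simpa [inner_neg_right] using hker (-v) (neg_mem hv)

theorem proxNormalCone_subset_span_gradients [FiniteDimensional ℝ E]
    (S : Set E) (hS : IsClosed S) (x : E) (hx : x ∈ frontier S)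
    (k : ℕ) (U : Set E) (ψ : E → (Fin k → ℝ))
    (hU : IsOpen U) (hxU : x ∈ U)
    (hψ : ContDiffOn ℝ 1 ψ U)
    (hsurj : ∀ u ∈ U, Function.Surjective (fderiv ℝ ψ u))
    (hlevel : U ∩ frontier S = U ∩ ψ ⁻¹' {0}) :
    proxNormalCone S x ⊆
      (Submodule.span ℝ (Set.range fun i : Fin k => gradient (fun y => ψ y i) x) : Set E) ∧
    (Submodule.span ℝ (Set.range fun i : Fin k => gradient (fun y => ψ y i) x) : Set E) =
      ((LinearMap.ker (fderiv ℝ ψ x : E →ₗ[ℝ] (Fin k → ℝ)))ᗮ : Set E) := by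
  have hψx : ContDiffAt ℝ 1 ψ x := hψ.contDiffAt (hU.mem_nhds hxU)
  have hspan := span_gradient_eq_orthogonal_ker_fderiv (hψx.differentiableAt one_ne_zero)
  have hψx0 : ψ x = 0 := (hlevel ▸ ⟨hxU, hx⟩ : x ∈ U ∩ ψ ⁻¹' {0}).2
  refine ⟨?_, by rw [hspan]⟩
  rw [hspan]
  refine proxNormalCone_subset_orthogonal_ker (hψx.hasStrictFDerivAt one_ne_zero)
    (LinearMap.range_eq_top.2 (hsurj x hxU)) ?_
  filter_upwards [hU.mem_nhds hxU] with y hyU hy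
  exact hS.frontier_subset (hlevel ▸ ⟨hyU, hy.trans hψx0⟩ : y ∈ U ∩ frontier S).2
end

section
/- Let S ⊆ E be a closed prox-regular set with nonempty interior, let x ∈ ∂S, and suppose there exist an open neighborhood U of x and a C² function ψ : U → ℝ with Dψ(u) ≠ 0 for every u ∈ U, such that U ∩ ∂S = ψ⁻¹(0) and ψ(y) ≤ 0 for every y ∈ U ∩ S. Then either N^P_S(x) = {λ∇ψ(x) : λ ≥ 0} (the cone generated by ∇ψ(x)) or N^P_S(x) = ℝ∇ψ(x) (the span of ∇ψ(x)). -/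
open Filter Topology Metric Set
open scoped RealInnerProductSpace NNReal

variable {E : Type*} [NormedAddCommGroup E] [InnerProductSpace ℝ E]

/-!
Since `ψ ≤ 0` on `S`, the second-order Taylor bound `ψ y ≥ ⟪∇ψ x, y - x⟫ - M ‖y - x‖²` makes
`∇ψ x` a proximal normal. Conversely, for `v ⊥ ∇ψ x` and small `t > 0`, Taylor's formula and the
intermediate value theorem along the direction `∇ψ x` give a zero of `ψ`, hence a boundary point
of `S`, at distance `O(t²)` from `x + t • v`; so `v` is a Bouligand tangent vector, and every
proximal normal, being polar to the tangent cone, lies on the line `ℝ ∇ψ x`. A cone contained in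
that line and containing `∇ψ x` is the ray or the whole line.
-/

theorem exists_eq_smul_of_inner_nonpos {ξ G : E} (h : ∀ v, ⟪G, v⟫ = 0 → ⟪ξ, v⟫ ≤ 0) :
    ∃ l : ℝ, ξ = l • G := by
  have hξ : ξ ∈ (ℝ ∙ G)ᗮᗮ := (Submodule.mem_orthogonal' _ _).2 fun v hv => by
    rw [Submodule.mem_orthogonal_singleton_iff_inner_right] at hv
    refine le_antisymm (h v hv) ?_
    simpa [inner_neg_right] using h (-v) (by simp [inner_neg_right, hv])
  obtain ⟨l, hl⟩ := Submodule.mem_span_singleton.1 ((ℝ ∙ G).orthogonal_orthogonal ▸ hξ)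
  exact ⟨l, hl.symm⟩

theorem eq_ray_or_eq_line_of_smul_mem {𝕜 M : Type*} [Field 𝕜] [LinearOrder 𝕜]
    [IsStrictOrderedRing 𝕜] [AddCommGroup M] [Module 𝕜 M] {C : Set M} {g : M}
    (hsmul : ∀ c : 𝕜, 0 ≤ c → ∀ ξ ∈ C, c • ξ ∈ C) (hg : g ∈ C)
    (hC : ∀ ξ ∈ C, ∃ l : 𝕜, ξ = l • g) :
    C = {ξ | ∃ l : 𝕜, 0 ≤ l ∧ ξ = l • g} ∨ C = {ξ | ∃ l : 𝕜, ξ = l • g} := by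
  have hray : ∀ l : 𝕜, 0 ≤ l → l • g ∈ C := fun l hl => hsmul l hl g hg
  by_cases hneg : -g ∈ C
  · refine Or.inr (Set.ext fun ξ => ⟨hC ξ, ?_⟩)
    rintro ⟨l, rfl⟩
    rcases le_total 0 l with hl | hl
    · exact hray l hl
    · simpa using hsmul (-l) (neg_nonneg.2 hl) _ hneg
  · refine Or.inl (Set.ext fun ξ => ⟨fun hξ => ?_, fun ⟨l, hl, hξ⟩ => hξ ▸ hray l hl⟩)
    obtain ⟨l, rfl⟩ := hC ξ hξ
    refine ⟨l, not_lt.1 fun hl => hneg ?_, rfl⟩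
    have := hsmul (-l⁻¹) (by simpa using hl.le) _ hξ
    rwa [smul_smul, neg_mul, inv_mul_cancel₀ hl.ne, neg_one_smul] at this

theorem ContDiffAt.exists_eventually_norm_sub_sub_fderiv_le {F : Type*} [NormedAddCommGroup F]
    [NormedSpace ℝ F] {F' : Type*} [NormedAddCommGroup F'] [NormedSpace ℝ F'] {f : F → F'} {x : F}
    (hf : ContDiffAt ℝ 2 f x) :
    ∃ M, 0 ≤ M ∧ ∀ᶠ y in 𝓝 x, ‖f y - f x - fderiv ℝ f x (y - x)‖ ≤ M * ‖y - x‖ ^ 2 := by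
  obtain ⟨L, t, ht, hlip⟩ := (hf.fderiv_right (m := 1) (by norm_num)).exists_lipschitzOnWith
  have hdiff : ∀ᶠ y in 𝓝 x, DifferentiableAt ℝ f y :=
    (hf.eventually (by simp)).mono fun y hy => hy.differentiableAt (by norm_num)
  obtain ⟨ρ, hρ, hball⟩ := nhds_basis_ball.mem_iff.1 (inter_mem ht hdiff)
  refine ⟨L, L.coe_nonneg, Filter.mem_of_superset (ball_mem_nhds x hρ) fun y hy => ?_⟩
  have hsub : closedBall x ‖y - x‖ ⊆ ball x ρ :=
    closedBall_subset_ball (by simpa [dist_eq_norm] using hy)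
  have hderiv : ∀ z ∈ closedBall x ‖y - x‖,
      HasFDerivWithinAt f (fderiv ℝ f z) (closedBall x ‖y - x‖) z := fun z hz =>
    (hball (hsub hz)).2.hasFDerivAt.hasFDerivWithinAt
  have hbound : ∀ z ∈ closedBall x ‖y - x‖, ‖fderiv ℝ f z - fderiv ℝ f x‖ ≤ L * ‖y - x‖ := by
    intro z hz
    rw [← dist_eq_norm]
    refine (hlip.dist_le_mul z (hball (hsub hz)).1 x (hball (mem_ball_self hρ)).1).trans ?_
    exact mul_le_mul_of_nonneg_left hz L.coe_nonneg
  have := (convex_closedBall x ‖y - x‖).norm_image_sub_le_of_norm_hasFDerivWithin_le' hderiv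
    hbound (mem_closedBall_self (norm_nonneg _)) (y := y) (by simp [dist_eq_norm])
  simpa [sq, mul_assoc] using this

theorem mem_proxNormalCone_iff {S : Set E} {x ξ : E} :
    ξ ∈ proxNormalCone S x ↔
      ∃ σ : ℝ, ∀ᶠ y in 𝓝 x, y ∈ S → ⟪ξ, y - x⟫ ≤ σ * ‖y - x‖ ^ 2 := by
  constructor
  · rintro ⟨σ, -, V, hV, hσ⟩
    exact ⟨σ, Filter.mem_of_superset hV fun y hyV hyS => hσ y ⟨hyS, hyV⟩⟩
  · rintro ⟨σ, hσ⟩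
    refine ⟨|σ| + 1, by positivity, _, hσ, fun y ⟨hyS, hyσ⟩ => ?_⟩
    have : σ ≤ |σ| + 1 := (le_abs_self σ).trans (le_add_of_nonneg_right zero_le_one)
    exact (hyσ hyS).trans (by gcongr)

theorem smul_mem_proxNormalCone {S : Set E} {x ξ : E} {c : ℝ} (hc : 0 ≤ c)
    (hξ : ξ ∈ proxNormalCone S x) : c • ξ ∈ proxNormalCone S x := by
  obtain ⟨σ, hσ⟩ := mem_proxNormalCone_iff.1 hξ
  refine mem_proxNormalCone_iff.2 ⟨c * σ, hσ.mono fun y hy hyS => ?_⟩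
  rw [real_inner_smul_left, mul_assoc]
  exact mul_le_mul_of_nonneg_left (hy hyS) hc

theorem proxNormalCone_subset_polarCone_bouligandCone (S : Set E) (x : E) :
    proxNormalCone S x ⊆ polarCone (bouligandCone S x) := by
  rintro ξ hξ v ⟨z, t, hzS, ht, hz, ht0, hv⟩
  obtain ⟨σ, hσ⟩ := mem_proxNormalCone_iff.1 hξ
  set w := fun i => (t i)⁻¹ • (z i - x)
  have hzw : ∀ i, z i - x = t i • w i := fun i => by
    simp only [w, smul_smul, mul_inv_cancel₀ (ht i).ne', one_smul]
  have hle : ∀ᶠ i in atTop, ⟪ξ, w i⟫ ≤ σ * t i * ‖w i‖ ^ 2 := by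
    filter_upwards [hz.eventually hσ] with i hi
    have := hi (hzS i)
    rw [hzw, real_inner_smul_right, norm_smul, Real.norm_of_nonneg (ht i).le] at this
    nlinarith [ht i]
  have hrhs : Tendsto (fun i => σ * t i * ‖w i‖ ^ 2) atTop (𝓝 (σ * 0 * ‖v‖ ^ 2)) :=
    (tendsto_const_nhds.mul ht0).mul (hv.norm.pow 2)
  simpa using le_of_tendsto_of_tendsto (tendsto_const_nhds.inner hv) hrhs hle

theorem mem_bouligandCone_of_eventually {S : Set E} {x v : E} {C : ℝ}
    (h : ∀ᶠ t in 𝓝[>] 0, ∃ z ∈ S, ‖z - (x + t • v)‖ ≤ C * t ^ 2) :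
    v ∈ bouligandCone S x := by
  obtain ⟨u, hu : 0 < u, hIoo⟩ := mem_nhdsGT_iff_exists_Ioo_subset.1 h
  set t : ℕ → ℝ := fun i => u / ((i : ℝ) + 2)
  have ht : ∀ i, t i ∈ Ioo 0 u := fun i => by
    constructor
    · positivity
    · exact div_lt_self hu (by linarith [(i.cast_nonneg : (0 : ℝ) ≤ i)])
  choose z hzS hz using fun i => hIoo (ht i)
  have ht0 : Tendsto t atTop (𝓝 0) :=
    tendsto_const_nhds.div_atTop (tendsto_natCast_atTop_atTop.atTop_add tendsto_const_nhds)
  have hv : Tendsto (fun i => (t i)⁻¹ • (z i - x)) atTop (𝓝 v) := by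
    rw [tendsto_iff_norm_sub_tendsto_zero]
    refine squeeze_zero (fun _ => norm_nonneg _) (fun i => ?_) (by simpa using ht0.const_mul C)
    have hti : 0 < t i := (ht i).1
    calc ‖(t i)⁻¹ • (z i - x) - v‖ = (t i)⁻¹ * ‖z i - (x + t i • v)‖ := by
          rw [← norm_smul_of_nonneg (inv_nonneg.2 hti.le), smul_sub, smul_sub, smul_add,
            smul_smul, inv_mul_cancel₀ hti.ne', one_smul, sub_add_eq_sub_sub]
      _ ≤ (t i)⁻¹ * (C * t i ^ 2) := by gcongr; exact hz i
      _ = C * t i := by field_simp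
  have hzx : Tendsto z atTop (𝓝 x) := by
    have := ht0.smul hv
    rw [zero_smul] at this
    refine tendsto_sub_nhds_zero_iff.1 (this.congr fun i => ?_)
    rw [smul_smul, mul_inv_cancel₀ (ht i).1.ne', one_smul]
  exact ⟨z, t, hzS, fun i => (ht i).1, hzx, ht0, hv⟩

theorem exists_eventually_zero_near_of_inner_eq_zero {ψ : E → ℝ} {x G v : E} {M r : ℝ}
    (hG : G ≠ 0) (hv : ⟪G, v⟫ = 0) (hM : 0 ≤ M) (hr : 0 < r)
    (hcont : ContinuousOn ψ (closedBall x r))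
    (htaylor : ∀ y ∈ closedBall x r, |ψ y - ⟪G, y - x⟫| ≤ M * ‖y - x‖ ^ 2) :
    ∃ C, ∀ᶠ t in 𝓝[>] 0, ∃ z ∈ closedBall x r, ψ z = 0 ∧ ‖z - (x + t • v)‖ ≤ C * t ^ 2 := by
  have hGpos : 0 < ‖G‖ := norm_pos_iff.2 hG
  set B := ‖v‖ + 1
  -- `K` makes the Taylor error `M (tB)²` smaller than `K t² ‖G‖²`, so `ψ` changes sign on
  -- the segment `s ↦ x + t • v + s • G`, `|s| ≤ K t²`
  set K := (M * B ^ 2 + 1) / ‖G‖ ^ 2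
  have hK : 0 < K := by positivity
  have hKG : K * ‖G‖ ^ 2 = M * B ^ 2 + 1 := div_mul_cancel₀ _ (by positivity)
  refine ⟨K * ‖G‖, ?_⟩
  filter_upwards [Ioo_mem_nhdsGT (show 0 < min (1 / (K * ‖G‖)) (r / B) by positivity)]
    with t ⟨ht, htt₀⟩
  have hKt : K * t ^ 2 * ‖G‖ ≤ t := by
    have := (le_div_iff₀ (by positivity)).1 (htt₀.le.trans (min_le_left _ _))
    nlinarith
  have htB : t * B ≤ r := (le_div_iff₀ (by positivity)).1 (htt₀.le.trans (min_le_right _ _))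
  have hw : ∀ s, |s| ≤ K * t ^ 2 → ‖t • v + s • G‖ ≤ t * B := fun s hs =>
    calc ‖t • v + s • G‖ ≤ t * ‖v‖ + |s| * ‖G‖ := by
          refine (norm_add_le _ _).trans_eq ?_
          rw [norm_smul, norm_smul, Real.norm_of_nonneg ht.le, Real.norm_eq_abs]
      _ ≤ t * ‖v‖ + t := by nlinarith
      _ = t * B := by ring
  have hmem : ∀ s, |s| ≤ K * t ^ 2 → x + (t • v + s • G) ∈ closedBall x r := fun s hs => by
    rw [mem_closedBall, dist_eq_norm, add_sub_cancel_left]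
    exact (hw s hs).trans htB
  have hφ : ∀ s, |s| ≤ K * t ^ 2 →
      |ψ (x + (t • v + s • G)) - s * ‖G‖ ^ 2| ≤ M * B ^ 2 * t ^ 2 := fun s hs => by
    have h := htaylor _ (hmem s hs)
    rw [add_sub_cancel_left, inner_add_right, real_inner_smul_right, real_inner_smul_right, hv,
      real_inner_self_eq_norm_sq, mul_zero, zero_add] at h
    refine h.trans ?_
    have := hw s hs
    have : ‖t • v + s • G‖ ^ 2 ≤ (t * B) ^ 2 := by gcongr
    nlinarith
  have hKt0 : |K * t ^ 2| ≤ K * t ^ 2 := (abs_of_pos (by positivity)).le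
  have hneg : ψ (x + (t • v + (-(K * t ^ 2)) • G)) ≤ 0 := by
    have := (abs_le.1 (hφ _ ((abs_neg _).trans_le hKt0))).2
    nlinarith
  have hpos : 0 ≤ ψ (x + (t • v + (K * t ^ 2) • G)) := by
    have := (abs_le.1 (hφ _ hKt0)).1
    nlinarith
  obtain ⟨s, hs, hs0⟩ := intermediate_value_Icc (neg_le_self (by positivity))
    (hcont.comp (by fun_prop) fun s hs => hmem s (abs_le.2 hs)) ⟨hneg, hpos⟩
  refine ⟨_, hmem s (abs_le.2 hs), hs0, ?_⟩
  rw [add_sub_add_left_eq_sub, add_sub_cancel_left, norm_smul, Real.norm_eq_abs]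
  nlinarith [abs_le.2 hs]

theorem proxNormalCone_eq_cone_or_span_gradient_general [FiniteDimensional ℝ E]
    (S : Set E) (hS : IsClosed S)
    (x : E) (hx : x ∈ frontier S)
    (U : Set E) (ψ : E → ℝ)
    (hU : IsOpen U) (hxU : x ∈ U)
    (hψ : ContDiffOn ℝ 2 ψ U)
    (hD : ∀ u ∈ U, fderiv ℝ ψ u ≠ 0)
    (hlevel : U ∩ frontier S = U ∩ ψ ⁻¹' {0})
    (hneg : ∀ y ∈ U ∩ S, ψ y ≤ 0) :
    proxNormalCone S x = {ξ | ∃ l : ℝ, 0 ≤ l ∧ ξ = l • gradient ψ x} ∨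
    proxNormalCone S x = {ξ | ∃ l : ℝ, ξ = l • gradient ψ x} := by
  have hψx : ψ x = 0 := (hlevel ▸ ⟨hxU, hx⟩ : x ∈ U ∩ ψ ⁻¹' {0}).2
  have hG : gradient ψ x ≠ 0 := fun h =>
    hD x hxU ((InnerProductSpace.toDual ℝ E).symm.map_eq_zero_iff.1 h)
  obtain ⟨M, hM, htaylor⟩ :=
    (hψ.contDiffAt (hU.mem_nhds hxU)).exists_eventually_norm_sub_sub_fderiv_le
  obtain ⟨r, hr, hball⟩ := nhds_basis_closedBall.mem_iff.1 (inter_mem htaylor (hU.mem_nhds hxU))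
  have hrU : closedBall x r ⊆ U := fun y hy => (hball hy).2
  have hrT : ∀ y ∈ closedBall x r, |ψ y - ⟪gradient ψ x, y - x⟫| ≤ M * ‖y - x‖ ^ 2 :=
    fun y hy => by simpa [hψx, inner_gradient_left] using (hball hy).1
  have hGmem : gradient ψ x ∈ proxNormalCone S x := by
    refine mem_proxNormalCone_iff.2 ⟨M, ?_⟩
    filter_upwards [closedBall_mem_nhds x hr] with y hy hyS
    linarith [(abs_le.1 (hrT y hy)).1, hneg y ⟨hrU hy, hyS⟩]
  have htangent : ∀ v, ⟪gradient ψ x, v⟫ = 0 → v ∈ bouligandCone S x := fun v hv => by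
    obtain ⟨C, hC⟩ := exists_eventually_zero_near_of_inner_eq_zero hG hv hM hr
      (hψ.continuousOn.mono hrU) hrT
    refine mem_bouligandCone_of_eventually (C := C) (hC.mono fun t ⟨z, hz, hz0, hzt⟩ => ?_)
    have : z ∈ U ∩ frontier S := hlevel ▸ ⟨hrU hz, hz0⟩
    exact ⟨z, hS.frontier_subset this.2, hzt⟩
  refine eq_ray_or_eq_line_of_smul_mem (fun c hc ξ hξ => smul_mem_proxNormalCone hc hξ) hGmem
    fun ξ hξ => exists_eq_smul_of_inner_nonpos fun v hv => ?_
  exact proxNormalCone_subset_polarCone_bouligandCone S x hξ v (htangent v hv)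

theorem proxNormalCone_eq_cone_or_span_gradient [FiniteDimensional ℝ E]
    (S : Set E) (hS : IsClosed S) (hpr : ProxRegular S)
    (hint : (interior S).Nonempty)
    (x : E) (hx : x ∈ frontier S)
    (U : Set E) (ψ : E → ℝ)
    (hU : IsOpen U) (hxU : x ∈ U)
    (hψ : ContDiffOn ℝ 2 ψ U)
    (hD : ∀ u ∈ U, fderiv ℝ ψ u ≠ 0)
    (hlevel : U ∩ frontier S = U ∩ ψ ⁻¹' {0})
    (hneg : ∀ y ∈ U ∩ S, ψ y ≤ 0) :
    proxNormalCone S x = {ξ | ∃ l : ℝ, 0 ≤ l ∧ ξ = l • gradient ψ x} ∨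
    proxNormalCone S x = {ξ | ∃ l : ℝ, ξ = l • gradient ψ x} :=
  proxNormalCone_eq_cone_or_span_gradient_general S hS x hx U ψ hU hxU hψ hD hlevel hneg
end

section
/- Let S ⊆ E be a closed prox-regular set whose boundary ∂S is a C² embedded submanifold of E, let x ∈ ∂S, and let U, ψ witness this near x (ψ : U → ℝ^k a C² map with surjective derivative at each point of U and U ∩ ∂S = ψ⁻¹(0)). Set Ŝ := (E \ S) ∪ ∂S. Then T^B_S(x) ∩ T^B_Ŝ(x) = ker Dψ(x) = T_x∂S. -/
open Filter Topology Metric Set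
open scoped RealInnerProductSpace NNReal

variable {E : Type*} [NormedAddCommGroup E] [InnerProductSpace ℝ E]

/-- A local C² defining chart for the boundary of `S` at `z`:
an open neighborhood `U` and a C² map `ψ : U → ℝ^k` with surjective derivative at
each point of `U` such that `U ∩ ∂S = ψ⁻¹(0)`. -/
def IsBoundaryChart (S : Set E) (z : E) (k : ℕ) (U : Set E) (ψ : E → (Fin k → ℝ)) : Prop :=
  IsOpen U ∧ z ∈ U ∧ ContDiffOn ℝ 2 ψ U ∧
    (∀ u ∈ U, Function.Surjective (fderiv ℝ ψ u)) ∧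
    U ∩ frontier S = U ∩ ψ ⁻¹' {0}

/-- The boundary of `S` is a C² embedded submanifold of `E`. -/
def BoundaryC2Submanifold (S : Set E) : Prop :=
  ∀ z ∈ frontier S, ∃ (k : ℕ) (U : Set E) (ψ : E → (Fin k → ℝ)), IsBoundaryChart S z k U ψ

/-!
A direction tangent both to `S` and to `Ŝ = Sᶜ ∪ ∂S` is tangent to `∂S`: every segment from a
point of `S` to a point of `Ŝ` meets `∂S`, and rescaling the meeting point by the matching convex
combination of the two scales puts its difference quotient on the segment between the two given
quotients. Near `x`, `∂S` is the level set `ψ⁻¹(0)`, whose Bouligand cone is `ker Dψ(x)`: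
differentiating along an approximating sequence gives one inclusion; the implicit function
theorem, which yields a curve in the level set with any prescribed velocity in the kernel, gives
the other.
-/

theorem IsPreconnected.inter_frontier_nonempty {X : Type*} [TopologicalSpace X] {s t : Set X}
    (hs : IsPreconnected s) (hst : (s ∩ t).Nonempty) (hst' : (s \ t).Nonempty) :
    (s ∩ frontier t).Nonempty := by
  have := isPreconnected_iff_preconnectedSpace.mp hs
  obtain ⟨p, hps, hpt⟩ := hst
  obtain ⟨q, hqs, hqt⟩ := hst'
  have : (((↑) : s → X) ⁻¹' t).Nonempty ∧ ((↑) : s → X) ⁻¹' t ≠ univ :=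
    ⟨⟨⟨p, hps⟩, hpt⟩, fun h => hqt (h.symm ▸ mem_univ (⟨q, hqs⟩ : s) :)⟩
  obtain ⟨r, hr⟩ := nonempty_frontier_iff.mpr this
  exact ⟨r, r.2, continuous_subtype_val.frontier_preimage_subset t hr⟩

theorem segment_inter_frontier_nonempty {F : Type*} [AddCommGroup F] [Module ℝ F]
    [TopologicalSpace F] [IsTopologicalAddGroup F] [ContinuousSMul ℝ F] {S : Set F} {z w : F}
    (hz : z ∈ S) (hw : w ∈ Sᶜ ∪ frontier S) : (segment ℝ z w ∩ frontier S).Nonempty := by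
  rcases hw with hw | hw
  · exact (convex_segment z w).isPreconnected.inter_frontier_nonempty
      ⟨z, left_mem_segment ℝ z w, hz⟩ ⟨w, right_mem_segment ℝ z w, hw⟩
  · exact ⟨w, right_mem_segment ℝ z w, hw⟩

theorem tendsto_of_eventually_mem_segment {F : Type*} [SeminormedAddCommGroup F]
    [NormedSpace ℝ F] {α : Type*} {l : Filter α} {u w p : α → F} {v : F} (hu : Tendsto u l (𝓝 v))
    (hw : Tendsto w l (𝓝 v)) (hp : ∀ᶠ i in l, p i ∈ segment ℝ (u i) (w i)) :
    Tendsto p l (𝓝 v) := by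
  refine Metric.tendsto_nhds.mpr fun ε hε => ?_
  filter_upwards [Metric.tendsto_nhds.mp hu ε hε, Metric.tendsto_nhds.mp hw ε hε, hp]
    with i hui hwi hpi
  exact (convex_ball v ε).segment_subset hui hwi hpi

-- Since `a + b = 1`, `a • z + b • w - x = (a * t) • t⁻¹ • (z - x) + (b * τ) • τ⁻¹ • (w - x)`.
theorem inv_smul_sub_mem_segment {F : Type*} [AddCommGroup F] [Module ℝ F] {x z w : F}
    {t τ a b : ℝ} (ht : 0 < t) (hτ : 0 < τ) (ha : 0 ≤ a) (hb : 0 ≤ b) (hab : a + b = 1) :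
    (a * t + b * τ)⁻¹ • (a • z + b • w - x) ∈ segment ℝ (t⁻¹ • (z - x)) (τ⁻¹ • (w - x)) := by
  have hs : 0 < a * t + b * τ := by
    rcases ha.eq_or_lt with rfl | ha
    · nlinarith
    · positivity
  refine ⟨a * t / (a * t + b * τ), b * τ / (a * t + b * τ), by positivity, by positivity,
    by field_simp, ?_⟩
  match_scalars <;> field_simp; linarith

theorem mem_bouligandCone_of_eventually_s6 {A : Set E} {x v : E} {z : ℕ → E} {t : ℕ → ℝ}
    (hz : ∀ᶠ i in atTop, z i ∈ A) (ht : Tendsto t atTop (𝓝[>] 0))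
    (hzx : Tendsto z atTop (𝓝 x)) (hv : Tendsto (fun i => (t i)⁻¹ • (z i - x)) atTop (𝓝 v)) :
    v ∈ bouligandCone A x := by
  obtain ⟨N, hN⟩ := (hz.and (ht.eventually self_mem_nhdsWithin)).exists_forall_of_atTop
  have hshift : Tendsto (· + N) atTop atTop := tendsto_add_atTop_nat N
  exact ⟨fun i => z (i + N), fun i => t (i + N), fun i => (hN _ (by omega)).1,
    fun i => (hN _ (by omega)).2, hzx.comp hshift,
    (tendsto_nhds_of_tendsto_nhdsWithin ht).comp hshift, hv.comp hshift⟩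

theorem bouligandCone_mono_nhds {A B : Set E} {x : E} (h : 𝓝[A] x ≤ 𝓝[B] x) :
    bouligandCone A x ⊆ bouligandCone B x := by
  rintro v ⟨z, t, hz, ht, hzx, ht0, hv⟩
  have hzA : Tendsto z atTop (𝓝[A] x) := tendsto_nhdsWithin_iff.mpr ⟨hzx, .of_forall hz⟩
  exact mem_bouligandCone_of_eventually_s6 ((hzA.mono_right h).eventually self_mem_nhdsWithin)
    (tendsto_nhdsWithin_iff.mpr ⟨ht0, .of_forall ht⟩) hzx hv

theorem bouligandCone_mono {A B : Set E} {x : E} (h : A ⊆ B) :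
    bouligandCone A x ⊆ bouligandCone B x :=
  bouligandCone_mono_nhds (nhdsWithin_mono x h)

theorem bouligandCone_congr {A B : Set E} {x : E} (h : 𝓝[A] x = 𝓝[B] x) :
    bouligandCone A x = bouligandCone B x :=
  (bouligandCone_mono_nhds h.le).antisymm (bouligandCone_mono_nhds h.ge)

theorem mem_bouligandCone_of_hasDerivWithinAt {A : Set E} {γ : ℝ → E} {v : E}
    (hγ : HasDerivWithinAt γ v (Ioi 0) 0) (hA : ∀ᶠ r in 𝓝[>] 0, γ r ∈ A) :
    v ∈ bouligandCone A (γ 0) := by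
  have ht : Tendsto (fun i : ℕ => (i : ℝ)⁻¹) atTop (𝓝[>] 0) :=
    tendsto_inv_atTop_nhdsGT_zero.comp tendsto_natCast_atTop_atTop
  have hslope := ((hasDerivWithinAt_iff_tendsto_slope' (lt_irrefl 0)).mp hγ).comp ht
  refine mem_bouligandCone_of_eventually_s6 (ht.eventually hA) ht
    (hγ.continuousWithinAt.tendsto.comp ht) ?_
  simpa [Function.comp_def, slope_def_module] using hslope

theorem bouligandCone_inter_subset_of_segment {A B C : Set E} {x : E}
    (h : ∀ z ∈ A, ∀ w ∈ B, (segment ℝ z w ∩ C).Nonempty) :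
    bouligandCone A x ∩ bouligandCone B x ⊆ bouligandCone C x := by
  rintro v ⟨⟨z, t, hz, ht, hzx, ht0, hzv⟩, ⟨w, τ, hw, hτ, hwx, hτ0, hwv⟩⟩
  choose y hy hyC using fun i => h (z i) (hz i) (w i) (hw i)
  have hyx : Tendsto y atTop (𝓝 x) :=
    tendsto_of_eventually_mem_segment hzx hwx (.of_forall hy)
  choose a b ha hb hab hya using hy
  set s : ℕ → ℝ := fun i => a i * t i + b i * τ i
  have hs_mem : ∀ i, s i ∈ segment ℝ (t i) (τ i) := fun i =>
    ⟨a i, b i, ha i, hb i, hab i, rfl⟩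
  have hs : Tendsto s atTop (𝓝[>] 0) :=
    tendsto_nhdsWithin_iff.mpr ⟨tendsto_of_eventually_mem_segment ht0 hτ0 (.of_forall hs_mem),
      .of_forall fun i => (convex_Ioi 0).segment_subset (ht i) (hτ i) (hs_mem i)⟩
  have hq : ∀ i,
      (s i)⁻¹ • (y i - x) ∈ segment ℝ ((t i)⁻¹ • (z i - x)) ((τ i)⁻¹ • (w i - x)) :=
    fun i => hya i ▸ inv_smul_sub_mem_segment (ht i) (hτ i) (ha i) (hb i) (hab i)
  exact mem_bouligandCone_of_eventually_s6 (.of_forall hyC) hs hyx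
    (tendsto_of_eventually_mem_segment hzv hwv (.of_forall hq))

theorem bouligandCone_inter_compl_union_frontier {S : Set E} (hS : IsClosed S) (x : E) :
    bouligandCone S x ∩ bouligandCone (Sᶜ ∪ frontier S) x = bouligandCone (frontier S) x :=
  (bouligandCone_inter_subset_of_segment fun _ hz _ hw =>
    segment_inter_frontier_nonempty hz hw).antisymm
    (subset_inter (bouligandCone_mono hS.frontier_subset) (bouligandCone_mono subset_union_right))

section LevelSet

variable {F : Type*} [NormedAddCommGroup F] [NormedSpace ℝ F] {f : E → F} {f' : E →L[ℝ] F}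
  {a : E}

theorem HasFDerivAt.bouligandCone_preimage_subset_ker (hf : HasFDerivAt f f' a) :
    bouligandCone (f ⁻¹' {f a}) a ⊆ (f'.ker : Set E) := by
  rintro v ⟨z, t, hz, -, hzx, -, hv⟩
  have hlim := (hf.hasFDerivWithinAt (s := f ⁻¹' {f a})).lim (sub_self a ▸ hzx.sub_const a)
    (.of_forall fun i => by simpa using hz i) hv
  simp only [add_sub_cancel, show ∀ i, f (z i) = f a from hz, sub_self, smul_zero] at hlim
  exact (tendsto_nhds_unique hlim tendsto_const_nhds :)

theorem HasStrictFDerivAt.ker_subset_bouligandCone_preimage [CompleteSpace E]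
    [FiniteDimensional ℝ F] (hf : HasStrictFDerivAt f f' a) (hf' : f'.range = ⊤) :
    (f'.ker : Set E) ⊆ bouligandCone (f ⁻¹' {f a}) a := by
  intro v hv
  set w : f'.ker := ⟨v, hv⟩
  set γ : ℝ → E := fun r => hf.implicitFunction f f' hf' (f a) (r • w)
  have hγ0 : γ 0 = a := by
    simp only [γ, zero_smul]
    exact hf.implicitFunction_apply_image hf'
  have hγ : HasDerivAt γ v 0 := by
    have hline : HasDerivAt (fun r : ℝ => r • w) w 0 := by
      simpa using (hasDerivAt_id (0 : ℝ)).smul_const w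
    have himpl :
        HasFDerivAt (hf.implicitFunction f f' hf' (f a)) f'.ker.subtypeL ((0 : ℝ) • w) := by
      simpa only [zero_smul] using (hf.to_implicitFunction hf').hasFDerivAt
    exact himpl.comp_hasDerivAt 0 hline
  have hlevel : ∀ᶠ r in 𝓝[>] 0, γ r ∈ f ⁻¹' {f a} := by
    have hline : Tendsto (fun r : ℝ => (f a, r • w)) (𝓝 0) (𝓝 (f a, 0)) :=
      (continuous_const.prodMk (continuous_id.smul continuous_const)).tendsto' 0 _ (by simp)
    exact nhdsWithin_le_nhds (hline.eventually (hf.map_implicitFunction_eq hf'))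
  simpa [hγ0] using mem_bouligandCone_of_hasDerivWithinAt hγ.hasDerivWithinAt hlevel

theorem HasStrictFDerivAt.bouligandCone_preimage_eq_ker [CompleteSpace E]
    [FiniteDimensional ℝ F] (hf : HasStrictFDerivAt f f' a) (hf' : f'.range = ⊤) :
    bouligandCone (f ⁻¹' {f a}) a = f'.ker :=
  hf.hasFDerivAt.bouligandCone_preimage_subset_ker.antisymm
    (hf.ker_subset_bouligandCone_preimage hf')

end LevelSet

theorem IsBoundaryChart.nhdsWithin_frontier_eq {S U : Set E} {x : E} {k : ℕ}
    {ψ : E → Fin k → ℝ} (h : IsBoundaryChart S x k U ψ) (hx : x ∈ frontier S) :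
    𝓝[frontier S] x = 𝓝[ψ ⁻¹' {ψ x}] x := by
  obtain ⟨hU, hxU, -, -, heq⟩ := h
  have hψx : ψ x = 0 := (heq ▸ ⟨hxU, hx⟩ : x ∈ U ∩ ψ ⁻¹' {0}).2
  rw [hψx, nhdsWithin_restrict' _ (hU.mem_nhds hxU), inter_comm, heq, inter_comm,
    ← nhdsWithin_restrict' _ (hU.mem_nhds hxU)]

theorem bouligand_inter_bouligand_compl_eq_tangent_general [FiniteDimensional ℝ E]
    (S : Set E) (hS : IsClosed S)
    (x : E) (hx : x ∈ frontier S)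
    (k : ℕ) (U : Set E) (ψ : E → (Fin k → ℝ))
    (hchart : IsBoundaryChart S x k U ψ) :
    bouligandCone S x ∩ bouligandCone (Sᶜ ∪ frontier S) x =
      (LinearMap.ker (fderiv ℝ ψ x : E →ₗ[ℝ] (Fin k → ℝ)) : Set E) := by
  have := FiniteDimensional.complete ℝ E
  have ⟨hU, hxU, hψ, hsurj, _⟩ := hchart
  have hψx : HasStrictFDerivAt ψ (fderiv ℝ ψ x) x :=
    (hψ.contDiffAt (hU.mem_nhds hxU)).hasStrictFDerivAt two_ne_zero
  rw [bouligandCone_inter_compl_union_frontier hS,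
    bouligandCone_congr (hchart.nhdsWithin_frontier_eq hx)]
  exact hψx.bouligandCone_preimage_eq_ker (LinearMap.range_eq_top.mpr (hsurj x hxU))

theorem bouligand_inter_bouligand_compl_eq_tangent [FiniteDimensional ℝ E]
    (S : Set E) (hS : IsClosed S) (hpr : ProxRegular S)
    (hbd : BoundaryC2Submanifold S)
    (x : E) (hx : x ∈ frontier S)
    (k : ℕ) (U : Set E) (ψ : E → (Fin k → ℝ))
    (hchart : IsBoundaryChart S x k U ψ) :
    bouligandCone S x ∩ bouligandCone (Sᶜ ∪ frontier S) x =
      (LinearMap.ker (fderiv ℝ ψ x : E →ₗ[ℝ] (Fin k → ℝ)) : Set E) :=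
  bouligand_inter_bouligand_compl_eq_tangent_general S hS x hx k U ψ hchart
end

section
/- Let S ⊆ E be a closed φ-convex set for a continuous φ : S → [0,∞), let x₁ ∈ E \ S, and let s₁ ∈ S be a nearest point of S to x₁ (so ‖x₁ − s₁‖ = dist(x₁, S)). Let r > 0 and ρ ≥ 0 satisfy ‖x₁ − s₁‖ ≤ r, φ(s₁) ≤ ρ and 2ρr < 1, and let U be a neighborhood of s₁ on which the φ-convexity inequality at s₁ holds. Then for every s ∈ S ∩ U one has the quadratic growth estimate ‖x₁ − s‖² ≥ ‖x₁ − s₁‖² + (1 − 2ρr)‖s − s₁‖². -/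
open Filter Topology Metric Set
open scoped RealInnerProductSpace NNReal

variable {E : Type*} [NormedAddCommGroup E] [InnerProductSpace ℝ E]

theorem norm_sub_sq_eq_sub_two_inner_add (x y s : E) :
    ‖x - y‖ ^ 2 = ‖x - s‖ ^ 2 - 2 * ⟪x - s, y - s⟫ + ‖y - s‖ ^ 2 := by
  rw [← norm_sub_sq_real, sub_sub_sub_cancel_right]

theorem two_inner_le_norm_sub_sq_of_norm_sub_le {x y s : E} (h : ‖x - s‖ ≤ ‖x - y‖) :
    2 * ⟪x - s, y - s⟫ ≤ ‖y - s‖ ^ 2 := by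
  have hsq : ‖x - s‖ ^ 2 ≤ ‖x - y‖ ^ 2 := pow_le_pow_left₀ (norm_nonneg _) h 2
  rw [norm_sub_sq_eq_sub_two_inner_add x y s] at hsq
  linarith

theorem sub_mem_proxNormalCone_of_norm_sub_eq_infDist {S : Set E} {x s : E}
    (h : ‖x - s‖ = infDist x S) : x - s ∈ proxNormalCone S s := by
  refine ⟨1 / 2, one_half_pos, univ, univ_mem, fun y ⟨hy, _⟩ => ?_⟩
  have hle : ‖x - s‖ ≤ ‖x - y‖ := by
    rw [h, ← dist_eq_norm]
    exact infDist_le_dist_of_mem hy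
  linarith [two_inner_le_norm_sub_sq_of_norm_sub_le hle]

theorem norm_sub_sq_add_le_of_inner_le {x y s : E} {c : ℝ}
    (h : ⟪x - s, y - s⟫ ≤ c * ‖y - s‖ ^ 2) :
    ‖x - s‖ ^ 2 + (1 - 2 * c) * ‖y - s‖ ^ 2 ≤ ‖x - y‖ ^ 2 := by
  rw [norm_sub_sq_eq_sub_two_inner_add x y s]
  linarith

theorem quadratic_growth_of_phiConvex_general
    (S : Set E) (φ : E → ℝ)
    (x₁ : E) (s₁ : E)
    (hnear : ‖x₁ - s₁‖ = infDist x₁ S)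
    (r ρ : ℝ) (hρ : 0 ≤ ρ)
    (hdist : ‖x₁ - s₁‖ ≤ r) (hφρ : φ s₁ ≤ ρ)
    (U : Set E)
    (hineq : ∀ ξ ∈ proxNormalCone S s₁, ∀ y ∈ S ∩ U,
      ⟪ξ, y - s₁⟫ ≤ φ s₁ * ‖ξ‖ * ‖y - s₁‖ ^ 2) :
    ∀ s ∈ S ∩ U, ‖x₁ - s₁‖ ^ 2 + (1 - 2 * ρ * r) * ‖s - s₁‖ ^ 2 ≤ ‖x₁ - s‖ ^ 2 := by
  intro s hs
  have hcoeff : φ s₁ * ‖x₁ - s₁‖ ≤ ρ * r :=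
    (mul_le_mul_of_nonneg_right hφρ (norm_nonneg _)).trans (mul_le_mul_of_nonneg_left hdist hρ)
  have hinner : ⟪x₁ - s₁, s - s₁⟫ ≤ ρ * r * ‖s - s₁‖ ^ 2 :=
    (hineq _ (sub_mem_proxNormalCone_of_norm_sub_eq_infDist hnear) s hs).trans
      (mul_le_mul_of_nonneg_right hcoeff (sq_nonneg _))
  simpa only [mul_assoc] using norm_sub_sq_add_le_of_inner_le hinner

theorem quadratic_growth_of_phiConvex [FiniteDimensional ℝ E]
    (S : Set E) (hS : IsClosed S) (φ : E → ℝ) (hφ : IsPhiConvex S φ)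
    (x₁ : E) (hx₁ : x₁ ∉ S) (s₁ : E) (hs₁ : s₁ ∈ S)
    (hnear : ‖x₁ - s₁‖ = infDist x₁ S)
    (r ρ : ℝ) (hr : 0 < r) (hρ : 0 ≤ ρ)
    (hdist : ‖x₁ - s₁‖ ≤ r) (hφρ : φ s₁ ≤ ρ) (hsmall : 2 * ρ * r < 1)
    (U : Set E) (hU : U ∈ 𝓝 s₁)
    (hineq : ∀ ξ ∈ proxNormalCone S s₁, ∀ y ∈ S ∩ U,
      ⟪ξ, y - s₁⟫ ≤ φ s₁ * ‖ξ‖ * ‖y - s₁‖ ^ 2) :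
    ∀ s ∈ S ∩ U, ‖x₁ - s₁‖ ^ 2 + (1 - 2 * ρ * r) * ‖s - s₁‖ ^ 2 ≤ ‖x₁ - s‖ ^ 2 :=
  quadratic_growth_of_phiConvex_general S φ x₁ s₁ hnear r ρ hρ hdist hφρ U hineq
end

section
/- Let S ⊆ E be a closed prox-regular set whose boundary ∂S is a C² embedded submanifold of E, let x ∈ ∂S, and let v ∈ (T^B_S(x) \ T_x∂S) ∪ {0}. Then there exists ε > 0 such that x + tv ∈ S for all t ∈ [0, ε). -/
/-!
If `Dψ(x) v ≠ 0`, then `ψ (x + t v) ≠ 0` for small `t > 0`, so the ray `x + (0, ε) v` misses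
`∂S`; being connected, it lies either in `S` or in the complement of `S`. In the second case take
`z_i ∈ S`, `t_i ↓ 0` with `(z_i - x) / t_i → v`: the segment from `z_i` to `x + t_i v ∉ S` meets
`∂S` at some `w_i` with `‖w_i - x - t_i v‖ ≤ ‖z_i - x - t_i v‖ = o(t_i)`. Hence `v` is tangent to
`∂S = ψ⁻¹(0)` at `x`, which forces `Dψ(x) v = 0`.
-/

open Filter Topology Metric Set
open scoped RealInnerProductSpace NNReal

variable {E : Type*} [NormedAddCommGroup E] [InnerProductSpace ℝ E]

theorem IsPreconnected.subset_or_disjoint_of_disjoint_frontier {α : Type*} [TopologicalSpace α]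
    {s S : Set α} (hs : IsPreconnected s) (hfr : Disjoint s (frontier S)) :
    s ⊆ S ∨ Disjoint s S := by
  have hcover : s ⊆ interior S ∪ (closure S)ᶜ := fun y hy => by
    by_cases hyc : y ∈ closure S
    · exact .inl (not_not.mp fun hyi => hfr.notMem_of_mem_left hy ⟨hyc, hyi⟩)
    · exact .inr hyc
  rcases hs.subset_or_subset isOpen_interior isClosed_closure.isOpen_compl
    (disjoint_compl_right.mono_left (interior_subset.trans subset_closure)) hcover with h | h
  · exact .inl (h.trans interior_subset)
  · exact .inr (disjoint_compl_left.mono h subset_closure)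

section Tangent

open scoped Pointwise

variable {𝕜 V W : Type*} [NontriviallyNormedField 𝕜] [NormedAddCommGroup V] [NormedSpace 𝕜 V]
  [NormedAddCommGroup W] [NormedSpace 𝕜 W] {f : V → W} {f' : V →L[𝕜] W} {x : V}

theorem HasFDerivAt.tangentConeAt_preimage_singleton_subset_ker (hf : HasFDerivAt f f' x) :
    tangentConeAt 𝕜 (f ⁻¹' {f x}) x ⊆ LinearMap.ker (f' : V →ₗ[𝕜] W) := by
  intro y hy
  have hsingle : tangentConeAt 𝕜 ({f x} : Set W) (f x) ⊆ 0 :=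
    tangentConeAt_subset_zero fun hacc => by
      obtain ⟨z, ⟨-, rfl⟩, hne⟩ := accPt_iff_nhds.mp hacc univ univ_mem
      exact hne rfl
  exact hsingle (tangentConeAt_mono (image_preimage_subset f _)
    (hf.hasFDerivWithinAt.mapsTo_tangent_cone hy))

theorem HasFDerivAt.eventually_apply_add_smul_ne (hf : HasFDerivAt f f' x) {v : V}
    (hv : f' v ≠ 0) : ∀ᶠ t in 𝓝[≠] (0 : 𝕜), f (x + t • v) ≠ f x := by
  by_contra h
  simp only [not_eventually, not_not] at h
  have := frequently_iff_neBot.mp h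
  refine hv (hf.tangentConeAt_preimage_singleton_subset_ker ?_)
  exact mem_tangentConeAt_of_add_smul_mem (l := 𝓝[≠] 0 ⊓ 𝓟 {t | f (x + t • v) = f x})
    (c := id) (tendsto_id'.mpr inf_le_left)
    (eventually_inf_principal.mpr (.of_forall fun t ht => ht))

end Tangent

theorem tendsto_inv_smul_sub_of_norm_sub_le {V ι : Type*} [NormedAddCommGroup V]
    [NormedSpace ℝ V] {l : Filter ι} {x v : V} {t : ι → ℝ} {z w : ι → V} (ht₀ : ∀ i, 0 < t i)
    (hz : Tendsto (fun i => (t i)⁻¹ • (z i - x)) l (𝓝 v))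
    (hw : ∀ᶠ i in l, ‖w i - (x + t i • v)‖ ≤ ‖z i - (x + t i • v)‖) :
    Tendsto (fun i => (t i)⁻¹ • (w i - x)) l (𝓝 v) := by
  have hdev : ∀ i y, ‖(t i)⁻¹ • (y - x) - v‖ = (t i)⁻¹ * ‖y - (x + t i • v)‖ := fun i y => by
    have : (t i)⁻¹ • (y - x) - v = (t i)⁻¹ • (y - (x + t i • v)) := by
      rw [smul_sub, smul_sub, smul_add, inv_smul_smul₀ (ht₀ i).ne']
      abel
    rw [this, norm_smul, Real.norm_of_nonneg (inv_pos.mpr (ht₀ i)).le]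
  rw [tendsto_iff_norm_sub_tendsto_zero] at hz ⊢
  refine squeeze_zero' (.of_forall fun i => norm_nonneg _) ?_ hz
  filter_upwards [hw] with i hi
  rw [hdev, hdev]
  exact mul_le_mul_of_nonneg_left hi (inv_pos.mpr (ht₀ i)).le

theorem mem_tangentConeAt_frontier_of_eventually_add_smul_notMem {S : Set E} {x v : E}
    (hv : v ∈ bouligandCone S x) (hray : ∀ᶠ t in 𝓝[>] (0 : ℝ), x + t • v ∉ S) :
    v ∈ tangentConeAt ℝ (frontier S) x := by
  obtain ⟨z, t, hzS, ht₀, -, ht, hzv⟩ := hv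
  have htpos : Tendsto t atTop (𝓝[>] 0) := tendsto_nhdsWithin_iff.mpr ⟨ht, .of_forall ht₀⟩
  have hcross : ∀ᶠ i in atTop, ∃ w, w ∈ segment ℝ (x + t i • v) (z i) ∧ w ∈ frontier S := by
    filter_upwards [htpos.eventually hray] with i hi
    by_contra hno
    have hdisj : Disjoint (segment ℝ (x + t i • v) (z i)) (frontier S) :=
      Set.disjoint_left.mpr fun w hw hwf => hno ⟨w, hw, hwf⟩
    rcases (convex_segment _ _).isPreconnected.subset_or_disjoint_of_disjoint_frontier hdisj
      with h | h
    · exact hi (h (left_mem_segment ..))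
    · exact h.notMem_of_mem_left (right_mem_segment ..) (hzS i)
  obtain ⟨w, hw⟩ := hcross.choice
  have hwv : Tendsto (fun i => (t i)⁻¹ • (w i - x)) atTop (𝓝 v) :=
    tendsto_inv_smul_sub_of_norm_sub_le ht₀ hzv
      (hw.mono fun i hi => norm_sub_le_of_mem_segment hi.1)
  refine mem_tangentConeAt_of_seq atTop (fun i => (t i)⁻¹) (fun i => w i - x) ?_
    (hw.mono fun i hi => by simpa using hi.2) hwv
  simpa [smul_inv_smul₀ (ht₀ _).ne'] using ht.smul hwv

theorem eventually_add_smul_mem_of_mem_bouligandCone {S : Set E} {x v : E}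
    (hv : v ∈ bouligandCone S x) (hfr : ∀ᶠ t in 𝓝[>] (0 : ℝ), x + t • v ∉ frontier S)
    (hvfr : v ∉ tangentConeAt ℝ (frontier S) x) : ∀ᶠ t in 𝓝[>] (0 : ℝ), x + t • v ∈ S := by
  obtain ⟨ε, hε, hεfr⟩ := mem_nhdsGT_iff_exists_Ioo_subset.mp hfr
  rcases (isPreconnected_Ioo (a := 0) (b := ε)).image (fun t : ℝ => x + t • v) (by fun_prop)
    |>.subset_or_disjoint_of_disjoint_frontier
      (disjoint_left.mpr (by rintro _ ⟨t, ht, rfl⟩; exact hεfr ht)) with hin | hout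
  · exact mem_of_superset (Ioo_mem_nhdsGT hε) fun t ht => hin ⟨t, ht, rfl⟩
  · refine absurd (mem_tangentConeAt_frontier_of_eventually_add_smul_notMem hv ?_) hvfr
    exact mem_of_superset (Ioo_mem_nhdsGT hε) fun t ht => hout.notMem_of_mem_left ⟨t, ht, rfl⟩

namespace IsBoundaryChart

variable {S U : Set E} {z : E} {k : ℕ} {ψ : E → (Fin k → ℝ)}

theorem hasFDerivAt (h : IsBoundaryChart S z k U ψ) : HasFDerivAt ψ (fderiv ℝ ψ z) z :=
  ((h.2.2.1.contDiffAt (h.1.mem_nhds h.2.1)).differentiableAt (by norm_num)).hasFDerivAt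

theorem frontier_inter_eq (h : IsBoundaryChart S z k U ψ) (hz : z ∈ frontier S) :
    frontier S ∩ U = ψ ⁻¹' {ψ z} ∩ U := by
  obtain ⟨-, hzU, -, -, hfr⟩ := h
  have hψz : ψ z = 0 := by simpa using (hfr.subset ⟨hzU, hz⟩).2
  rw [hψz, inter_comm, hfr, inter_comm]

theorem tangentConeAt_frontier_subset_ker (h : IsBoundaryChart S z k U ψ)
    (hz : z ∈ frontier S) :
    tangentConeAt ℝ (frontier S) z ⊆ LinearMap.ker (fderiv ℝ ψ z : E →ₗ[ℝ] (Fin k → ℝ)) := by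
  rw [← tangentConeAt_inter_nhds (h.1.mem_nhds h.2.1), h.frontier_inter_eq hz,
    tangentConeAt_inter_nhds (h.1.mem_nhds h.2.1)]
  exact h.hasFDerivAt.tangentConeAt_preimage_singleton_subset_ker

theorem eventually_add_smul_notMem_frontier (h : IsBoundaryChart S z k U ψ)
    (hz : z ∈ frontier S) {v : E} (hv : fderiv ℝ ψ z v ≠ 0) :
    ∀ᶠ t in 𝓝[>] (0 : ℝ), z + t • v ∉ frontier S := by
  have hrayU : ∀ᶠ t in 𝓝[>] (0 : ℝ), z + t • v ∈ U :=
    (Continuous.tendsto' (by fun_prop) 0 z (by simp)).mono_left nhdsWithin_le_nhds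
      |>.eventually_mem (h.1.mem_nhds h.2.1)
  filter_upwards [hrayU, nhdsGT_le_nhdsNE 0 (h.hasFDerivAt.eventually_apply_add_smul_ne hv)]
    with t htU htψ htfr
  exact htψ ((h.frontier_inter_eq hz).subset ⟨htfr, htU⟩).1

end IsBoundaryChart

theorem segment_mem_of_bouligand_not_tangent_general
    (S : Set E) (hS : IsClosed S)
    (x : E) (hx : x ∈ frontier S)
    (k : ℕ) (U : Set E) (ψ : E → (Fin k → ℝ))
    (hchart : IsBoundaryChart S x k U ψ)
    (v : E)
    (hv : v ∈ (bouligandCone S x \ (LinearMap.ker (fderiv ℝ ψ x : E →ₗ[ℝ] (Fin k → ℝ)) : Set E)) ∪ {0}) :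
    ∃ ε : ℝ, 0 < ε ∧ ∀ t ∈ Ico (0:ℝ) ε, x + t • v ∈ S := by
  have hxS : x ∈ S := hS.frontier_subset hx
  rcases hv with ⟨hvB, hvker⟩ | rfl
  · have hray : ∀ᶠ t in 𝓝[>] (0 : ℝ), x + t • v ∈ S :=
      eventually_add_smul_mem_of_mem_bouligandCone hvB
        (hchart.eventually_add_smul_notMem_frontier hx hvker)
        fun hvfr => hvker (hchart.tangentConeAt_frontier_subset_ker hx hvfr)
    obtain ⟨ε, hε, hεS⟩ := mem_nhdsGT_iff_exists_Ioo_subset.mp hray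
    refine ⟨ε, hε, fun t ht => ?_⟩
    rcases ht.1.eq_or_lt with rfl | htpos
    · simpa using hxS
    · exact hεS ⟨htpos, ht.2⟩
  · exact ⟨1, one_pos, fun t _ => by simpa using hxS⟩

theorem segment_mem_of_bouligand_not_tangent [FiniteDimensional ℝ E]
    (S : Set E) (hS : IsClosed S) (hpr : ProxRegular S)
    (hbd : BoundaryC2Submanifold S)
    (x : E) (hx : x ∈ frontier S)
    (k : ℕ) (U : Set E) (ψ : E → (Fin k → ℝ))
    (hchart : IsBoundaryChart S x k U ψ)
    (v : E)
    (hv : v ∈ (bouligandCone S x \ (LinearMap.ker (fderiv ℝ ψ x : E →ₗ[ℝ] (Fin k → ℝ)) : Set E)) ∪ {0}) :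
    ∃ ε : ℝ, 0 < ε ∧ ∀ t ∈ Ico (0:ℝ) ε, x + t • v ∈ S :=
  segment_mem_of_bouligand_not_tangent_general S hS x hx k U ψ hchart v hv
end

section
/- Let C = ([0,1] × {0}) ∪ (K × [0,1]) ∪ ({0} × [0,1]) ⊆ ℝ² be the comb space, where K = {1/n : n ∈ ℕ, n ≥ 1}. Then for every x ∈ {0} × [0,1] and every r > 0 there exists a point z ∈ ℝ² with ‖z − x‖ < r that has at least two distinct nearest points in C; consequently reach(C, x) = 0 for every x ∈ {0} × [0,1]. -/
open Metric Set

noncomputable section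

/-- The set of points of the plane having a unique nearest point in `A`. -/
def Unp (A : Set (EuclideanSpace ℝ (Fin 2))) : Set (EuclideanSpace ℝ (Fin 2)) :=
  {z | ∃! a : EuclideanSpace ℝ (Fin 2), a ∈ A ∧ dist z a = infDist z A}

/-- reach(A, x) = sup {r ≥ 0 : B(x,r) ⊆ Unp(A)}. -/
def reach (A : Set (EuclideanSpace ℝ (Fin 2))) (x : EuclideanSpace ℝ (Fin 2)) : ℝ :=
  sSup {r : ℝ | 0 ≤ r ∧ ball x r ⊆ Unp A}

/-- The comb space ([0,1] × {0}) ∪ (K × [0,1]) ∪ ({0} × [0,1]) with K = {1/n : n ≥ 1}. -/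
def combSpace : Set (EuclideanSpace ℝ (Fin 2)) :=
  {p | (p 0 ∈ Icc (0:ℝ) 1 ∧ p 1 = 0) ∨
       ((∃ n : ℕ, 1 ≤ n ∧ p 0 = 1 / (n : ℝ)) ∧ p 1 ∈ Icc (0:ℝ) 1) ∨
       (p 0 = 0 ∧ p 1 ∈ Icc (0:ℝ) 1)}

/-!
A point `x` of the left edge `{0} × [0,1]` is approached by consecutive teeth `1/(n+1)`, `1/n`.
Let `z` lie midway between them, at a height `y ≥ x₁` that is at least half their gap `d`.
Both teeth are at distance exactly `d` from `z`, and no point of the comb is closer: no tooth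
lies strictly between the two (nor does the left edge), and the base is `y ≥ d` below `z`.
So `z` has two nearest points; as such `z` come arbitrarily close to `x`, the only `r ≥ 0`
with `B(x, r) ⊆ Unp C` is `r = 0`.
-/

local notation "ℝ²" => EuclideanSpace ℝ (Fin 2)

theorem notMem_Unp_of_two_nearest {A : Set ℝ²} {z c₁ c₂ : ℝ²} (h₁ : c₁ ∈ A) (h₂ : c₂ ∈ A)
    (hne : c₁ ≠ c₂) (hd₁ : dist z c₁ = infDist z A) (hd₂ : dist z c₂ = infDist z A) :
    z ∉ Unp A := by
  rintro ⟨c, -, hc⟩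
  exact hne ((hc c₁ ⟨h₁, hd₁⟩).trans (hc c₂ ⟨h₂, hd₂⟩).symm)

theorem reach_eq_zero_of_forall_exists_notMem_Unp {A : Set ℝ²} {x : ℝ²}
    (h : ∀ r, 0 < r → ∃ z ∈ ball x r, z ∉ Unp A) : reach A x = 0 := by
  have hradii : {r : ℝ | 0 ≤ r ∧ ball x r ⊆ Unp A} = {0} := by
    refine eq_singleton_iff_unique_mem.mpr ⟨⟨le_rfl, by simp⟩, ?_⟩
    rintro r ⟨hr, hball⟩
    by_contra hr0
    obtain ⟨z, hz, hzA⟩ := h r (lt_of_le_of_ne hr (Ne.symm hr0))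
    exact hzA (hball hz)
  rw [reach, hradii, csSup_singleton]

theorem EuclideanSpace.abs_sub_apply_le_dist {ι : Type*} [Fintype ι] (z c : EuclideanSpace ℝ ι)
    (i : ι) : |z i - c i| ≤ dist z c := by
  simpa [Real.dist_eq] using PiLp.dist_apply_le z c i

theorem dist_of_same_snd (a b y : ℝ) : dist !₂[a, y] !₂[b, y] = |a - b| := by
  simp [EuclideanSpace.dist_eq, Fin.sum_univ_two, Real.dist_eq, Real.sqrt_sq_eq_abs]

theorem half_sub_le_abs_midpoint_sub_of_notMem_Ioo {lo hi t : ℝ} (ht : t ∉ Ioo lo hi) :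
    (hi - lo) / 2 ≤ |(lo + hi) / 2 - t| := by
  rw [mem_Ioo, not_and_or, not_lt, not_lt] at ht
  rcases ht with ht | ht
  · exact le_abs.mpr (Or.inl (by linarith))
  · exact le_abs.mpr (Or.inr (by linarith))

theorem one_div_natCast_notMem_Ioo (n k : ℕ) :
    (1 / k : ℝ) ∉ Ioo (1 / ((n : ℝ) + 1)) (1 / n) := by
  rintro ⟨hlo, hhi⟩
  rcases Nat.lt_or_ge n k with hnk | hkn
  · have : (1 / k : ℝ) ≤ 1 / (n + 1) :=
      one_div_le_one_div_of_le (by positivity) (by exact_mod_cast hnk)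
    linarith
  · rcases k.eq_zero_or_pos with rfl | hk
    · have : (0 : ℝ) < 1 / (n + 1) := by positivity
      simp only [Nat.cast_zero, div_zero] at hlo
      linarith
    · have : (1 / n : ℝ) ≤ 1 / k :=
        one_div_le_one_div_of_le (by exact_mod_cast hk) (by exact_mod_cast hkn)
      linarith

theorem tooth_mem_combSpace {n : ℕ} (hn : 1 ≤ n) {y : ℝ} (hy : y ∈ Icc (0 : ℝ) 1) :
    !₂[1 / (n : ℝ), y] ∈ combSpace :=
  Or.inr (Or.inl ⟨⟨n, hn, rfl⟩, hy⟩)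

theorem le_dist_of_mem_combSpace {z c : ℝ²} {d : ℝ} (hd₁ : d ≤ z 1)
    (hd₀ : ∀ k : ℕ, d ≤ |z 0 - 1 / k|) (hc : c ∈ combSpace) : d ≤ dist z c := by
  have h₀ := EuclideanSpace.abs_sub_apply_le_dist z c 0
  have h₁ := EuclideanSpace.abs_sub_apply_le_dist z c 1
  rcases hc with ⟨-, hc₁⟩ | ⟨⟨k, -, hc₀⟩, -⟩ | ⟨hc₀, -⟩
  · rw [hc₁, sub_zero] at h₁
    linarith [le_abs_self (z 1)]
  · rw [hc₀] at h₀
    linarith [hd₀ k]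
  · -- `k = 0` covers the left segment, since `1 / 0 = 0` in `ℝ`
    have hd := hd₀ 0
    rw [Nat.cast_zero, div_zero] at hd
    rw [hc₀] at h₀
    linarith

theorem infDist_combSpace_between_teeth {n : ℕ} (hn : 1 ≤ n) {y : ℝ}
    (hy : (1 / n - 1 / (n + 1)) / 2 ≤ y) (hy₁ : y ≤ 1) :
    infDist !₂[(1 / ((n : ℝ) + 1) + 1 / n) / 2, y] combSpace = (1 / n - 1 / (n + 1)) / 2 := by
  have hgap : (0 : ℝ) ≤ (1 / n - 1 / (n + 1)) / 2 := by
    have : (1 / (n + 1) : ℝ) ≤ 1 / n := one_div_le_one_div_of_le (by positivity) (by linarith)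
    linarith
  have hmem := tooth_mem_combSpace hn ⟨hgap.trans hy, hy₁⟩
  refine le_antisymm ?_ ((le_infDist ⟨_, hmem⟩).mpr fun c hc => ?_)
  · calc infDist _ combSpace ≤ dist _ _ := infDist_le_dist_of_mem hmem
      _ = _ := by rw [dist_of_same_snd, abs_of_nonpos (by linarith)]; ring
  · exact le_dist_of_mem_combSpace hy
      (fun k => half_sub_le_abs_midpoint_sub_of_notMem_Ioo (one_div_natCast_notMem_Ioo n k)) hc

theorem exists_two_nearest_combSpace_near {x : ℝ²} (hx₀ : x 0 = 0) (hx₁ : x 1 ∈ Icc (0 : ℝ) 1)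
    {r : ℝ} (hr : 0 < r) : ∃ z : ℝ², ‖z - x‖ < r ∧
      ∃ c₁ c₂ : ℝ², c₁ ∈ combSpace ∧ c₂ ∈ combSpace ∧ c₁ ≠ c₂ ∧
        ‖z - c₁‖ = infDist z combSpace ∧ ‖z - c₂‖ = infDist z combSpace := by
  obtain ⟨m, hm⟩ := exists_nat_one_div_lt (half_pos hr)
  set n := m + 1
  set lo : ℝ := 1 / ((n : ℝ) + 1)
  set hi : ℝ := 1 / n
  set y := max (x 1) ((hi - lo) / 2)
  have hlo : 0 < lo := by positivity
  have hlohi : lo < hi := one_div_lt_one_div_of_lt (by positivity) (by linarith)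
  have hhi : hi < r / 2 := by simpa [hi, n] using hm
  have hhi₁ : hi ≤ 1 := by simpa [hi, n] using Nat.cast_inv_le_one n
  have hy₁ : y ≤ 1 := max_le hx₁.2 (by linarith)
  have hyI : y ∈ Icc (0 : ℝ) 1 := ⟨hx₁.1.trans (le_max_left _ _), hy₁⟩
  have hyx : y - x 1 ∈ Icc 0 ((hi - lo) / 2) :=
    ⟨sub_nonneg.mpr (le_max_left _ _),
      sub_le_iff_le_add.mpr (max_le (by linarith [hx₁.1]) (by linarith [hx₁.1]))⟩
  have hinf := infDist_combSpace_between_teeth (n := n) (by omega) (le_max_right _ _) hy₁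
  have hloMem : !₂[lo, y] ∈ combSpace := by
    simpa [lo, n] using tooth_mem_combSpace (n := n + 1) (by omega) hyI
  refine ⟨!₂[(lo + hi) / 2, y], ?_, !₂[hi, y], !₂[lo, y],
    tooth_mem_combSpace (by omega) hyI, hloMem, fun h => hlohi.ne (congrArg (· 0) h).symm, ?_, ?_⟩
  · rw [← dist_eq_norm, EuclideanSpace.dist_eq, Real.sqrt_lt' hr]
    simp only [Fin.sum_univ_two, Real.dist_eq, sq_abs, Fin.isValue, Matrix.cons_val_zero, hx₀,
      sub_zero, Matrix.cons_val_one, Matrix.cons_val_fin_one]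
    nlinarith [hyx.1, hyx.2]
  · rw [← dist_eq_norm, dist_of_same_snd, hinf, abs_of_nonpos (by linarith)]
    ring
  · rw [← dist_eq_norm, dist_of_same_snd, hinf, abs_of_nonneg (by linarith)]
    ring

theorem comb_space_reach_zero (x : EuclideanSpace ℝ (Fin 2))
    (hx0 : x 0 = 0) (hx1 : x 1 ∈ Icc (0:ℝ) 1) :
    (∀ r : ℝ, 0 < r → ∃ z : EuclideanSpace ℝ (Fin 2), ‖z - x‖ < r ∧
      ∃ c₁ c₂ : EuclideanSpace ℝ (Fin 2), c₁ ∈ combSpace ∧ c₂ ∈ combSpace ∧ c₁ ≠ c₂ ∧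
        ‖z - c₁‖ = infDist z combSpace ∧ ‖z - c₂‖ = infDist z combSpace) ∧
    reach combSpace x = 0 := by
  refine ⟨fun r hr => exists_two_nearest_combSpace_near hx0 hx1 hr,
    reach_eq_zero_of_forall_exists_notMem_Unp fun r hr => ?_⟩
  obtain ⟨z, hz, c₁, c₂, h₁, h₂, hne, hd₁, hd₂⟩ := exists_two_nearest_combSpace_near hx0 hx1 hr
  rw [← dist_eq_norm] at hz hd₁ hd₂
  exact ⟨z, hz, notMem_Unp_of_two_nearest h₁ h₂ hne hd₁ hd₂⟩
end
end
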